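/- With the notation of the Bakhvalov-type mesh and τ ≥ 5/2, μ₀⁻¹ ≤ N⁻¹, N ≥ 16, we have T_{N/4−3} = (h_{N/4−2} − h_{N/4−3})e^{−pμ₀x_{N/4−2}} ≤ C·μ₀⁻¹·N^{−τ} ≤ C·μ₀⁻¹·N^{−5/2}. -/

import Mathlib

/-!
Put `b = μ₀⁻¹` and `δ = 4(1 - b)/N`. On the coarse part of the mesh `x (N/4 - j)` is
`-(τ/(pμ₀)) log (b + jδ)`, so the weight `exp (-pμ₀ x (N/4 - 2))` equals `(b + 2δ)^τ` and the second
difference of the mesh is `τ/(pμ₀)` times `log ((b + 2δ)² / ((b + δ)(b + 3δ)))`. The logarithm is at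
most `log (4/3)`, and `b + 2δ ≤ 9/N` because `b ≤ 1/N`.
-/

open Real

lemma sq_add_two_mul_le_four_thirds_mul {b δ : ℝ} (hb : 0 ≤ b) (hδ : 0 ≤ δ) :
    (b + 2 * δ) ^ 2 ≤ 4 / 3 * ((b + δ) * (b + 3 * δ)) := by
  nlinarith [mul_nonneg hb hδ, sq_nonneg b]

lemma two_mul_log_add_two_mul_sub_le {b δ : ℝ} (hb : 0 < b) (hδ : 0 ≤ δ) :
    2 * log (b + 2 * δ) - log (b + δ) - log (b + 3 * δ) ≤ log (4 / 3) := by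
  have h := log_le_log (by positivity) (sq_add_two_mul_le_four_thirds_mul hb.le hδ)
  rw [log_pow, log_mul (by norm_num) (by positivity), log_mul (by positivity) (by positivity)] at h
  push_cast at h
  linarith

lemma one_sub_mul_cast_sub_div_eq {N j : ℕ} (hN : 4 ∣ N) (hN0 : 0 < N) (hj : j ≤ N / 4) (b : ℝ) :
    1 - 4 * (1 - b) * ((N / 4 - j : ℕ) : ℝ) / N = b + j * (4 * (1 - b) / N) := by
  have hN0' : (N : ℝ) ≠ 0 := by positivity
  rw [Nat.cast_sub hj, Nat.cast_div hN (by norm_num)]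
  field_simp
  ring

lemma exp_neg_mul_neg_div_mul_log {c u : ℝ} (τ : ℝ) (hc : c ≠ 0) (hu : 0 < u) :
    exp (-c * (-(τ / c) * log u)) = u ^ τ := by
  rw [rpow_def_of_pos hu]
  congr 1
  field_simp

lemma second_difference_mul_exp_eq {τ c b δ : ℝ} {x : ℕ → ℝ} {n : ℕ} (hc : c ≠ 0) (hb : 0 < b)
    (hδ : 0 ≤ δ) (hx : ∀ j : ℕ, j ≤ 3 → x (n - j) = -(τ / c) * log (b + j * δ)) :
    ((x (n - 1) - x (n - 2)) - (x (n - 2) - x (n - 3))) * exp (-c * x (n - 2)) =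
      τ / c * (2 * log (b + 2 * δ) - log (b + δ) - log (b + 3 * δ)) * (b + 2 * δ) ^ τ := by
  rw [hx 1 (by norm_num), hx 2 (by norm_num), hx 3 (by norm_num),
    exp_neg_mul_neg_div_mul_log τ hc (by positivity)]
  simp only [Nat.cast_one, Nat.cast_ofNat, one_mul]
  ring

lemma rpow_le_rpow_mul_rpow_neg_of_le_div {u K N τ : ℝ} (hu : 0 ≤ u) (hK : 0 ≤ K) (hN : 0 < N)
    (hτ : 0 ≤ τ) (h : u ≤ K / N) : u ^ τ ≤ K ^ τ * N ^ (-τ) := by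
  calc u ^ τ ≤ (K / N) ^ τ := rpow_le_rpow hu h hτ
    _ = K ^ τ * N ^ (-τ) := by rw [div_rpow hK hN.le, rpow_neg hN.le, div_eq_mul_inv]

theorem stmt_13_general (τ p : ℝ) (hτ : τ ≥ 5/2) (hp : 0 < p) :
    ∃ C : ℝ, 0 < C ∧
      ∀ (N : ℕ), 16 ≤ N → 4 ∣ N →
      ∀ μ₀ : ℝ, 0 < μ₀ → μ₀⁻¹ ≤ (N : ℝ)⁻¹ →
      ∀ x : ℕ → ℝ,
        (∀ i : ℕ, i ≤ N / 4 →
          x i = -(τ / (p * μ₀)) * Real.log (1 - 4 * (1 - μ₀⁻¹) * (i : ℝ) / (N : ℝ))) →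
        ((x (N / 4 - 1) - x (N / 4 - 2)) - (x (N / 4 - 2) - x (N / 4 - 3))) *
            Real.exp (-(p * μ₀) * x (N / 4 - 2)) ≤
          C * μ₀⁻¹ * (N : ℝ) ^ (-τ) ∧
        C * μ₀⁻¹ * (N : ℝ) ^ (-τ) ≤ C * μ₀⁻¹ * (N : ℝ) ^ (-(5/2 : ℝ)) := by
  have hτ0 : 0 < τ := by linarith
  refine ⟨τ / p * log (4 / 3) * 9 ^ τ, by positivity, ?_⟩
  intro N hN hdvd μ₀ hμ₀ hμ₀N x hx
  have hN1 : (16 : ℝ) ≤ N := by exact_mod_cast hN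
  have hb : 0 < μ₀⁻¹ := inv_pos.mpr hμ₀
  have hb1 : μ₀⁻¹ ≤ 1 := hμ₀N.trans (inv_le_one_of_one_le₀ (by linarith))
  set b := μ₀⁻¹
  set δ := 4 * (1 - b) / N
  have hδ : 0 ≤ δ := by positivity
  have hmesh : ∀ j : ℕ, j ≤ 3 → x (N / 4 - j) = -(τ / (p * μ₀)) * log (b + j * δ) := fun j hj ↦ by
    rw [hx _ (by omega), one_sub_mul_cast_sub_div_eq hdvd (by omega) (by omega)]
  have hweight : b + 2 * δ ≤ 9 / N := by
    have : b ≤ 1 / N := by rwa [one_div]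
    have : δ ≤ 4 / N := div_le_div_of_nonneg_right (by linarith) (by positivity)
    linarith [show (9 : ℝ) / N = 1 / N + 2 * (4 / N) by ring]
  refine ⟨?_, ?_⟩
  · calc _ = τ / (p * μ₀) * (2 * log (b + 2 * δ) - log (b + δ) - log (b + 3 * δ)) *
          (b + 2 * δ) ^ τ := second_difference_mul_exp_eq (by positivity) hb hδ hmesh
      _ ≤ τ / (p * μ₀) * log (4 / 3) * (9 ^ τ * (N : ℝ) ^ (-τ)) := by
        gcongr
        · exact two_mul_log_add_two_mul_sub_le hb hδ
        · exact rpow_le_rpow_mul_rpow_neg_of_le_div (by positivity) (by norm_num) (by positivity)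
            hτ0.le hweight
      _ = τ / p * log (4 / 3) * 9 ^ τ * b * (N : ℝ) ^ (-τ) := by
        simp only [b]
        field_simp
  · gcongr
    · linarith

theorem stmt_13 (τ p : ℝ) (hτ : τ ≥ 5/2) (hp : 0 < p) (hp1 : p < 1) :
    ∃ C : ℝ, 0 < C ∧
      ∀ (N : ℕ), 16 ≤ N → 4 ∣ N →
      ∀ μ₀ : ℝ, 0 < μ₀ → μ₀⁻¹ ≤ (N : ℝ)⁻¹ →
      ∀ x : ℕ → ℝ,
        (∀ i : ℕ, i ≤ N / 4 →
          x i = -(τ / (p * μ₀)) * Real.log (1 - 4 * (1 - μ₀⁻¹) * (i : ℝ) / (N : ℝ))) →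
        ((x (N / 4 - 1) - x (N / 4 - 2)) - (x (N / 4 - 2) - x (N / 4 - 3))) *
            Real.exp (-(p * μ₀) * x (N / 4 - 2)) ≤
          C * μ₀⁻¹ * (N : ℝ) ^ (-τ) ∧
        C * μ₀⁻¹ * (N : ℝ) ^ (-τ) ≤ C * μ₀⁻¹ * (N : ℝ) ^ (-(5/2 : ℝ)) :=
  stmt_13_general τ p hτ hp
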